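/- Let F_q be a finite field, A = F_q[T], and let k and m be positive integers. Then the sequence r_i = T^{i-1} (i = 1, ..., m) is an m-term permutation chain of kth power residue modulo P for infinitely many nonzero prime ideals P of A. -/

import Mathlib

/-- `c` is a `k`th power residue modulo the ideal `P`: there is `x` with `x ^ k ≡ c (mod P)`. -/
def IsKthPowerResidue {A : Type*} [CommRing A] (k : ℕ) (P : Ideal A) (c : A) : Prop :=
  ∃ x : A, x ^ k - c ∈ P

/-- `r 1, ..., r m` is an `m`-term permutation chain of `k`th power residue modulo `P`:
for every permutation `σ` of `{1, ..., m}`, the `m(m+1)/2` sums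
`∑_{l=i}^{j} r (σ l)` (`i ≤ j`) are pairwise incongruent modulo `P` and
each is a `k`th power residue modulo `P`. -/
def IsPermutationChain {A : Type*} [CommRing A] (k : ℕ) {m : ℕ} (P : Ideal A)
    (r : Fin m → A) : Prop :=
  ∀ σ : Equiv.Perm (Fin m),
    (∀ i j i' j' : Fin m, i ≤ j → i' ≤ j' → (i, j) ≠ (i', j') →
      (∑ l ∈ Finset.Icc i j, r (σ l)) - (∑ l ∈ Finset.Icc i' j', r (σ l)) ∉ P) ∧
    (∀ i j : Fin m, i ≤ j → IsKthPowerResidue k P (∑ l ∈ Finset.Icc i j, r (σ l)))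

/-! Every subset sum of distinct powers of `T` is a different polynomial, so it suffices to find,
for any finite set `S ⊆ A = F_q[T]` and any `D ≠ 0`, a prime `f ∤ D` modulo which every element
of `S` is a `k`-th power (distinctness modulo `f` is then bought by putting all differences into
`D`). Write `k = p^a k₀` with `p ∤ k₀`: the residue fields are finite, hence perfect, so only `k₀`
matters. Let `γ` be a primitive element, integral over `A`, of the splitting field of
`∏_{c ∈ S} (X^k₀ - c)` over `F_q(T)`, and `G` its minimal polynomial over `A`; every root is
`h(γ)/e` with `h ∈ A[X]`, `e ∈ A`, so `G ∣ h^k₀ - e^k₀ c`. A Euclid-type argument (Schur) gives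
primes `f ∤ D ∏ e` dividing a value `G(θ)`, and then `h(θ)/e` is a `k₀`-th root of `c` mod `f`.
-/

open Polynomial

section Residues

variable {A : Type*} [CommRing A] {P : Ideal A} {k : ℕ} {c : A}

theorem isKthPowerResidue_iff_exists_pow_eq_mk :
    IsKthPowerResidue k P c ↔ ∃ y : A ⧸ P, y ^ k = Ideal.Quotient.mk P c := by
  constructor
  · rintro ⟨x, hx⟩
    exact ⟨Ideal.Quotient.mk P x, by rwa [← map_pow, Ideal.Quotient.eq]⟩
  · rintro ⟨y, hy⟩
    obtain ⟨x, rfl⟩ := Ideal.Quotient.mk_surjective y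
    exact ⟨x, by rwa [← map_pow, Ideal.Quotient.eq] at hy⟩

theorem IsKthPowerResidue.of_pow_mul [P.IsMaximal] {e : A} (he : e ∉ P)
    (h : IsKthPowerResidue k P (e ^ k * c)) : IsKthPowerResidue k P c := by
  let := Ideal.Quotient.field P
  obtain ⟨y, hy⟩ := isKthPowerResidue_iff_exists_pow_eq_mk.mp h
  have he' : Ideal.Quotient.mk P e ≠ 0 := by rwa [Ne, Ideal.Quotient.eq_zero_iff_mem]
  refine isKthPowerResidue_iff_exists_pow_eq_mk.mpr ⟨y / Ideal.Quotient.mk P e, ?_⟩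
  rw [div_pow, hy, map_mul, map_pow, mul_div_cancel_left₀ _ (pow_ne_zero k he')]

theorem IsKthPowerResidue.mul_exponent_of_perfectRing (n : ℕ) [PerfectRing (A ⧸ P) n]
    (h : IsKthPowerResidue k P c) : IsKthPowerResidue (n * k) P c := by
  obtain ⟨y, hy⟩ := isKthPowerResidue_iff_exists_pow_eq_mk.mp h
  obtain ⟨z, rfl⟩ := (PerfectRing.bijective_frobenius (R := A ⧸ P) (p := n)).2 y
  exact isKthPowerResidue_iff_exists_pow_eq_mk.mpr ⟨z, by rw [pow_mul, hy]⟩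

end Residues

theorem IsPermutationChain.of_subsetSums {A : Type*} [CommRing A] {k m : ℕ} {P : Ideal A}
    {r : Fin m → A}
    (hne : ∀ s t : Finset (Fin m), s ≠ t → ∑ i ∈ s, r i - ∑ i ∈ t, r i ∉ P)
    (hres : ∀ s : Finset (Fin m), IsKthPowerResidue k P (∑ i ∈ s, r i)) :
    IsPermutationChain k P r := by
  have hsum : ∀ (σ : Equiv.Perm (Fin m)) (i j : Fin m),
      ∑ l ∈ Finset.Icc i j, r (σ l) = ∑ l ∈ (Finset.Icc i j).map σ.toEmbedding, r l := by
    intro σ i j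
    rw [Finset.sum_map]
    rfl
  refine fun σ => ⟨fun i j i' j' hij _ hne' => ?_, fun i j _ => hsum σ i j ▸ hres _⟩
  rw [hsum, hsum]
  refine hne _ _ fun h => hne' ?_
  rw [Finset.map_inj, ← Finset.coe_inj, Finset.coe_Icc, Finset.coe_Icc,
    Set.Icc_eq_Icc_iff hij] at h
  rw [h.1, h.2]

theorem Polynomial.sum_X_pow_injective {R ι : Type*} [Semiring R] [Nontrivial R] {e : ι → ℕ}
    (he : Function.Injective e) :
    Function.Injective fun s : Finset ι => ∑ i ∈ s, (X : R[X]) ^ e i := by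
  classical
  intro s t h
  ext i
  have := congrArg (coeff · (e i)) h
  simp only [finsetSum_coeff, coeff_X_pow, he.eq_iff, Finset.sum_ite_eq] at this
  split_ifs at this <;> simp_all

theorem Polynomial.exists_irreducible_dvd_eval_not_dvd {F : Type*} [Field F] {G : F[X][X]}
    (hG : 0 < G.natDegree) {D : F[X]} (hD : D ≠ 0) :
    ∃ f θ : F[X], Irreducible f ∧ ¬ f ∣ D ∧ f ∣ G.eval θ := by
  classical
  have hG0 : G ≠ 0 := ne_zero_of_natDegree_gt hG
  obtain ⟨z, hz⟩ : ∃ z, G.eval z ≠ 0 := by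
    by_contra! h
    exact hG0 (Polynomial.funext fun x => by simp [h x])
  set b := G.eval z
  have hGb : G - C b ≠ 0 := fun h => by
    have := natDegree_sub_C (p := G) (a := b)
    rw [h, natDegree_zero] at this
    omega
  -- `t ≡ z mod b D X` gives `G(t) = b u` with `u ≡ 1 mod D X`; avoiding the roots of
  -- `G` and `G - b` keeps `u` away from `0` and from the constants.
  have hbDX : b * D * X ≠ 0 := mul_ne_zero (mul_ne_zero hz hD) X_ne_zero
  obtain ⟨t, ⟨Y, rfl⟩, ht⟩ := (Set.infinite_range_of_injective (f := fun Y => z + b * D * X * Y)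
    fun Y₁ Y₂ h => mul_left_cancel₀ hbDX (add_left_cancel h)).exists_notMem_finset
    (G * (G - C b)).roots.toFinset
  simp only [Multiset.mem_toFinset, mem_roots (mul_ne_zero hG0 hGb), IsRoot, eval_mul, eval_sub,
    eval_C, mul_eq_zero, sub_eq_zero, not_or] at ht
  obtain ⟨htG, htb⟩ := ht
  obtain ⟨w, hw⟩ := sub_dvd_eval_sub (z + b * D * X * Y) z G
  set u := 1 + D * X * Y * w
  have hbu : G.eval (z + b * D * X * Y) = b * u := by linear_combination hw
  have hu0 : u ≠ 0 := fun h => htG (by rw [hbu, h, mul_zero])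
  have hu : ¬ IsUnit u := by
    intro hunit
    obtain ⟨a, -, ha⟩ := Polynomial.isUnit_iff.mp hunit
    have hX : X ∣ u - 1 := ⟨D * Y * w, by ring⟩
    rw [X_dvd_iff, ← ha, coeff_sub, coeff_C_zero, coeff_one_zero, sub_eq_zero] at hX
    exact htb (by rw [hbu, ← ha, hX, C_1, mul_one])
  obtain ⟨f, hf, hfu⟩ := WfDvdMonoid.exists_irreducible_factor hu hu0
  refine ⟨f, _, hf, fun hfD => hf.not_isUnit (isUnit_of_dvd_one ?_), hbu ▸ hfu.mul_left b⟩
  have : (1 : F[X]) = u - D * X * Y * w := by ring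
  exact this ▸ dvd_sub hfu (hfD.mul_right _ |>.mul_right _ |>.mul_right _)

theorem Polynomial.separable_prod_X_pow_sub_C {K : Type*} [Field K] {k : ℕ} (hk : (k : K) ≠ 0)
    {S : Finset K} (hS : 0 ∉ S) : (∏ a ∈ S, (X ^ k - C a)).Separable := by
  refine separable_prod' (fun a _ b _ hab => ?_) fun a ha =>
    separable_X_pow_sub_C a hk (ne_of_mem_of_not_mem ha hS)
  have h1 : C (b - a)⁻¹ * C (b - a) = 1 := by
    rw [← C_mul, inv_mul_cancel₀ (sub_ne_zero.mpr hab.symm), C_1]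
  exact ⟨C (b - a)⁻¹, -C (b - a)⁻¹, by rw [C_sub] at h1; linear_combination h1⟩

theorem Polynomial.exists_pow_eq_algebraMap_of_splits {K L : Type*} [Field K] [Field L]
    [Algebra K L] {k : ℕ} (hk : k ≠ 0) {Q : K[X]} (hQ0 : Q ≠ 0)
    (hQ : (Q.map (algebraMap K L)).Splits)
    {a : K} (ha : X ^ k - C a ∣ Q) : ∃ y : L, y ^ k = algebraMap K L a := by
  have hsplit : ((X ^ k - C a).map (algebraMap K L)).Splits :=
    hQ.of_dvd (Polynomial.map_ne_zero hQ0) (Polynomial.map_dvd _ ha)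
  obtain ⟨y, hy⟩ := hsplit.exists_eval_eq_zero (by
    rw [degree_map, degree_X_pow_sub_C (Nat.pos_of_ne_zero hk)]
    exact_mod_cast hk)
  exact ⟨y, by simpa [sub_eq_zero] using hy⟩

section PrimitiveElement

variable (A : Type*) {K L : Type*} [CommRing A] [IsDomain A] [Field K] [Algebra A K]
  [IsFractionRing A K] [Field L] [Algebra A L] [Algebra K L] [IsScalarTower A K L]

theorem exists_isIntegral_adjoin_eq_top [FiniteDimensional K L] [Algebra.IsSeparable K L] :
    ∃ γ : L, IsIntegral A γ ∧ Algebra.adjoin K {γ} = ⊤ := by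
  obtain ⟨γ₀, hγ₀⟩ := Field.exists_primitive_element K L
  have halg : IsAlgebraic K γ₀ := Algebra.IsAlgebraic.isAlgebraic γ₀
  obtain ⟨e, he, hint⟩ := ((IsFractionRing.isAlgebraic_iff A K L).mpr halg).exists_integral_multiple
  refine ⟨e • γ₀, hint, eq_top_iff.mpr ?_⟩
  rw [← Algebra.adjoin_eq_top_of_primitive_element halg hγ₀, Algebra.adjoin_le_iff,
    Set.singleton_subset_iff, SetLike.mem_coe]
  have he' : algebraMap A K e ≠ 0 := (map_ne_zero_iff _ (IsFractionRing.injective A K)).mpr he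
  convert Subalgebra.smul_mem _ (Algebra.self_mem_adjoin_singleton K (e • γ₀))
    (algebraMap A K e)⁻¹
  rw [← algebraMap_smul K e γ₀, inv_smul_smul₀ he']

variable {A}

theorem exists_aeval_eq_smul_of_adjoin_eq_top {γ : L} (hγ : Algebra.adjoin K {γ} = ⊤) (y : L) :
    ∃ (h : A[X]) (e : A), e ≠ 0 ∧ aeval γ h = e • y := by
  obtain ⟨H, rfl⟩ : ∃ H : K[X], aeval γ H = y := by
    rw [← AlgHom.mem_range, ← Algebra.adjoin_singleton_eq_range_aeval, hγ]
    trivial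
  obtain ⟨e, he, hH⟩ := IsLocalization.integerNormalization_spec (nonZeroDivisors A) H
  refine ⟨IsLocalization.integerNormalization (nonZeroDivisors A) H, e,
    nonZeroDivisors.ne_zero he, ?_⟩
  rw [← aeval_map_algebraMap K, hH, ← algebraMap_smul K e H, map_smul, algebraMap_smul]

end PrimitiveElement

theorem exists_natDegree_pos_forall_dvd_pow_sub_C {A : Type*} [CommRing A] [IsDomain A]
    [IsIntegrallyClosed A] {k : ℕ} (hk : (k : A) ≠ 0) {S : Finset A} (hS : 0 ∉ S) :
    ∃ G : A[X], 0 < G.natDegree ∧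
      ∀ c ∈ S, ∃ (h : A[X]) (e : A), e ≠ 0 ∧ G ∣ h ^ k - C (e ^ k * c) := by
  classical
  let K := FractionRing A
  have hinj : Function.Injective (algebraMap A K) := IsFractionRing.injective A K
  let Q : K[X] := ∏ a ∈ S.image (algebraMap A K), (X ^ k - C a)
  have hkK : (k : K) ≠ 0 := by rwa [← map_natCast (algebraMap A K), map_ne_zero_iff _ hinj]
  have hQ : Q.Separable := separable_prod_X_pow_sub_C hkK fun h => by
    obtain ⟨c, hc, hc0⟩ := Finset.mem_image.mp h
    exact hS (hinj (hc0.trans (map_zero _).symm) ▸ hc)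
  let L := Q.SplittingField
  have : Module.IsTorsionFree A L := Module.isTorsionFree_iff_algebraMap_injective.mpr <| by
    rw [IsScalarTower.algebraMap_eq A K L]
    exact (algebraMap K L).injective.comp hinj
  have : IsGalois K L := IsGalois.of_separable_splitting_field hQ
  obtain ⟨γ, hγint, hγ⟩ := exists_isIntegral_adjoin_eq_top A (K := K) (L := L)
  refine ⟨minpoly A γ, minpoly.natDegree_pos hγint, fun c hc => ?_⟩
  obtain ⟨y, hy⟩ := exists_pow_eq_algebraMap_of_splits (L := L) (a := algebraMap A K c)
    (fun h => hk (by rw [h, Nat.cast_zero])) hQ.ne_zero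
    (SplittingField.splits Q) (Finset.dvd_prod_of_mem _ (Finset.mem_image_of_mem _ hc))
  obtain ⟨h, e, he, hh⟩ := exists_aeval_eq_smul_of_adjoin_eq_top (A := A) hγ y
  refine ⟨h, e, he, minpoly.isIntegrallyClosed_dvd hγint ?_⟩
  rw [map_sub, map_pow, hh, aeval_C, _root_.smul_pow, hy, ← IsScalarTower.algebraMap_apply A K L,
    Algebra.smul_def, map_mul, map_pow, sub_self]

theorem Polynomial.exists_irreducible_forall_isKthPowerResidue_of_dvd {F : Type*} [Field F]
    {G : F[X][X]} (hG : 0 < G.natDegree) {k : ℕ} {S : Finset F[X]}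
    (hS : ∀ c ∈ S, ∃ (h : F[X][X]) (e : F[X]), e ≠ 0 ∧ G ∣ h ^ k - C (e ^ k * c))
    {D : F[X]} (hD : D ≠ 0) :
    ∃ f : F[X], Irreducible f ∧ ¬ f ∣ D ∧ ∀ c ∈ S, IsKthPowerResidue k (Ideal.span {f}) c := by
  choose! h e he hGh using hS
  obtain ⟨f, θ, hf, hfD, hfG⟩ := exists_irreducible_dvd_eval_not_dvd hG
    (mul_ne_zero hD (Finset.prod_ne_zero_iff.mpr he))
  have : (Ideal.span {f}).IsMaximal := PrincipalIdealRing.isMaximal_of_irreducible hf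
  refine ⟨f, hf, fun h => hfD (h.mul_right _), fun c hc => ?_⟩
  refine IsKthPowerResidue.of_pow_mul (e := e c) (fun hmem => hfD ?_) ⟨(h c).eval θ, ?_⟩
  · exact (Ideal.mem_span_singleton.mp hmem).trans ((Finset.dvd_prod_of_mem e hc).mul_left D)
  · rw [Ideal.mem_span_singleton]
    simpa using hfG.trans (eval_dvd (hGh c hc))

theorem Polynomial.finite_quotient_span_singleton {F : Type*} [Field F] [Finite F] {f : F[X]}
    (hf : f ≠ 0) : Finite (F[X] ⧸ Ideal.span {f}) :=
  have := (AdjoinRoot.powerBasis hf).finite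
  Module.finite_of_finite F (M := AdjoinRoot f)

theorem Polynomial.exists_irreducible_forall_isKthPowerResidue {F : Type*} [Field F] [Finite F]
    {k : ℕ} (hk : k ≠ 0) (S : Finset F[X]) {D : F[X]} (hD : D ≠ 0) :
    ∃ f : F[X], Irreducible f ∧ ¬ f ∣ D ∧ ∀ c ∈ S, IsKthPowerResidue k (Ideal.span {f}) c := by
  classical
  obtain ⟨p, _⟩ := CharP.exists F
  have hp : p.Prime := CharP.char_is_prime F p
  have : ExpChar F p := ExpChar.prime hp
  obtain ⟨a, k₀, hpk₀, rfl⟩ := Nat.exists_eq_pow_mul_and_not_dvd hk p hp.ne_one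
  have hk₀ : (k₀ : F[X]) ≠ 0 := by
    rwa [← map_natCast C, Ne, C_eq_zero, CharP.cast_eq_zero_iff F p]
  obtain ⟨G, hG, hGS⟩ := exists_natDegree_pos_forall_dvd_pow_sub_C hk₀ (S.notMem_erase 0)
  obtain ⟨f, hf, hfD, hres⟩ := exists_irreducible_forall_isKthPowerResidue_of_dvd hG hGS hD
  refine ⟨f, hf, hfD, fun c hc => ?_⟩
  obtain rfl | hc0 := eq_or_ne c 0
  · exact ⟨0, by simp [hk]⟩
  have : (Ideal.span {f}).IsMaximal := PrincipalIdealRing.isMaximal_of_irreducible hf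
  let := Ideal.Quotient.field (Ideal.span {f})
  have := finite_quotient_span_singleton hf.ne_zero
  have := expChar_of_injective_algebraMap (algebraMap F (F[X] ⧸ Ideal.span {f})).injective p
  exact (hres c (Finset.mem_erase.mpr ⟨hc0, hc⟩)).mul_exponent_of_perfectRing (p ^ a)

theorem Ideal.infinite_of_forall_exists_notMem {R : Type*} [CommRing R] [IsDomain R]
    {s : Set (Ideal R)} (hs : ⊥ ∉ s) (h : ∀ D ≠ (0 : R), ∃ P ∈ s, D ∉ P) : s.Infinite := by
  intro hfin
  have hne : ∀ P ∈ s, ∃ x ∈ P, x ≠ 0 := fun P hP =>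
    Submodule.exists_mem_ne_zero_of_ne_bot (ne_of_mem_of_not_mem hP hs)
  choose! x hxP hx0 using hne
  obtain ⟨P, hP, hDP⟩ := h (∏ P ∈ hfin.toFinset, x P)
    (Finset.prod_ne_zero_iff.mpr fun P hP => hx0 P (hfin.mem_toFinset.mp hP))
  exact hDP (P.mem_of_dvd (Finset.dvd_prod_of_mem x (hfin.mem_toFinset.mpr hP)) (hxP P hP))

theorem powers_of_T_permutation_chain_general (Fq : Type*) [Field Fq] [Fintype Fq]
    (k m : ℕ) (hk : 0 < k) :
    {P : Ideal (Polynomial Fq) | P ≠ ⊥ ∧ P.IsPrime ∧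
      IsPermutationChain k P (fun i : Fin m => (Polynomial.X : Polynomial Fq) ^ (i : ℕ))}.Infinite := by
  classical
  refine Ideal.infinite_of_forall_exists_notMem (fun h => h.1 rfl) fun D hD => ?_
  let c : Finset (Fin m) → Fq[X] := fun s => ∑ i ∈ s, X ^ (i : ℕ)
  have hc : Function.Injective c := sum_X_pow_injective Fin.val_injective
  let S := Finset.univ.image c
  obtain ⟨f, hf, hfD, hres⟩ := exists_irreducible_forall_isKthPowerResidue hk.ne' S
    (mul_ne_zero hD <| Finset.prod_ne_zero_iff.mpr fun x hx =>
      sub_ne_zero.mpr (Finset.mem_offDiag.mp hx).2.2)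
  have hcS : ∀ s, c s ∈ S := fun s => Finset.mem_image_of_mem c (Finset.mem_univ s)
  refine ⟨Ideal.span {f},
    ⟨?_, ?_, .of_subsetSums (fun s t hst hmem => hfD ?_) (hres _ <| hcS ·)⟩, ?_⟩
  · rw [Ne, Ideal.span_singleton_eq_bot]
    exact hf.ne_zero
  · exact (Ideal.span_singleton_prime hf.ne_zero).mpr hf.prime
  · refine (Ideal.mem_span_singleton.mp hmem).trans (Dvd.dvd.mul_left ?_ D)
    exact Finset.dvd_prod_of_mem (fun x => x.1 - x.2) (a := (c s, c t))
      (Finset.mem_offDiag.mpr ⟨hcS s, hcS t, hc.ne hst⟩)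
  · rw [Ideal.mem_span_singleton]
    exact fun h => hfD (h.mul_right _)

theorem powers_of_T_permutation_chain (Fq : Type*) [Field Fq] [Fintype Fq]
    (k m : ℕ) (hk : 0 < k) (hm : 0 < m) :
    {P : Ideal (Polynomial Fq) | P ≠ ⊥ ∧ P.IsPrime ∧
      IsPermutationChain k P (fun i : Fin m => (Polynomial.X : Polynomial Fq) ^ (i : ℕ))}.Infinite :=
  powers_of_T_permutation_chain_general Fq k m hk
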